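/- arXiv:1810.13019 — 3 statements merged into one kernel-verified Lean document; each statement's English description precedes it below -/
import Mathlib

section
/- Fix an initial state k∈K and suppose assumption (H_N) holds. Regard each entry W^k_λ(z)[𝐢,𝐣]=d^k_λ(𝐢,𝐣)−z·d^0_λ(𝐢,𝐣) as a polynomial in the two variables λ and z. Let Ẇ^k_λ(z) be any square sub-matrix of W^k_λ(z), obtained by selecting subsets S⊆I of rows and T⊆J of columns with |S|=|T|≥1, and set P(λ,z) := det(N^n·Ẇ^k_λ(z)). Then P(λ,z) is a polynomial in λ and z with integer coefficients, its degree in λ and its degree in z are each at most |I|·n, and every coefficient of P has bit-size at most f(|I|,n,N) := |I|·n·bit(n)+|I|·n·bit(N)+|I|·bit(|I|)+2·bit(|I|·n+1). -/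
open Filter Set Topology

noncomputable def matVal {α β : Type*} [Fintype α] [Fintype β] (M : α → β → ℝ) : ℝ :=
  ⨆ x : stdSimplex ℝ α, ⨅ y : stdSimplex ℝ β, ∑ a, ∑ b, x.1 a * M a b * y.1 b

def bitsize (p : ℕ) : ℕ := Nat.clog 2 (p + 1)

noncomputable def shapley {n : ℕ} {A B : Fin n → Type*}
    [∀ k, Fintype (A k)] [∀ k, Fintype (B k)]
    (g : (k : Fin n) → A k → B k → ℝ) (q : (k : Fin n) → A k → B k → Fin n → ℝ)
    (lam : ℝ) (u : Fin n → ℝ) : Fin n → ℝ :=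
  fun l => matVal (fun (i : A l) (j : B l) =>
    lam * g l i j + (1 - lam) * ∑ l', q l i j l' * u l')

noncomputable def dZero {n : ℕ} {A B : Fin n → Type*}
    (q : (k : Fin n) → A k → B k → Fin n → ℝ)
    (ii : (k : Fin n) → A k) (jj : (k : Fin n) → B k) (lam : ℝ) : ℝ :=
  Matrix.det (1 - (1 - lam) • Matrix.of (fun l l' => q l (ii l) (jj l) l'))

noncomputable def dK {n : ℕ} {A B : Fin n → Type*}
    (g : (k : Fin n) → A k → B k → ℝ) (q : (k : Fin n) → A k → B k → Fin n → ℝ)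
    (k : Fin n) (ii : (k : Fin n) → A k) (jj : (k : Fin n) → B k) (lam : ℝ) : ℝ :=
  Matrix.det (Matrix.updateCol
    (1 - (1 - lam) • Matrix.of (fun l l' => q l (ii l) (jj l) l')) k
    (fun l => g l (ii l) (jj l)))

noncomputable def Wmat {n : ℕ} {A B : Fin n → Type*}
    (g : (k : Fin n) → A k → B k → ℝ) (q : (k : Fin n) → A k → B k → Fin n → ℝ)
    (k : Fin n) (lam z : ℝ) :
    ((k : Fin n) → A k) → ((k : Fin n) → B k) → ℝ :=
  fun ii jj => dK g q k ii jj lam - z * dZero q ii jj lam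

/-- The entry W^k(λ,z)[𝐢,𝐣] = d^k_λ(𝐢,𝐣) − z·d^0_λ(𝐢,𝐣) viewed as a bivariate polynomial:
an element of (ℝ[λ])[z], the outer variable being z and the inner one λ. -/
noncomputable def WmatPoly {n : ℕ} {A B : Fin n → Type*}
    (g : (k : Fin n) → A k → B k → ℝ) (q : (k : Fin n) → A k → B k → Fin n → ℝ)
    (k : Fin n) (ii : (k : Fin n) → A k) (jj : (k : Fin n) → B k) :
    Polynomial (Polynomial ℝ) :=
  Polynomial.C (Matrix.det (Matrix.updateCol
      ((1 : Matrix (Fin n) (Fin n) (Polynomial ℝ))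
        - ((1 - Polynomial.X : Polynomial ℝ)) • Matrix.of (fun l l' => Polynomial.C (q l (ii l) (jj l) l')))
      k (fun l => Polynomial.C (g l (ii l) (jj l)))))
  - Polynomial.X * Polynomial.C (Matrix.det
      ((1 : Matrix (Fin n) (Fin n) (Polynomial ℝ))
        - ((1 - Polynomial.X : Polynomial ℝ)) • Matrix.of (fun l l' => Polynomial.C (q l (ii l) (jj l) l'))))

/-!
Clearing denominators, `N • (Id - (1 - λ) Q(𝐢,𝐣))` and `N • g(𝐢,𝐣)` have entries in `ℤ[λ]` of
degree at most one and with coefficients of absolute value summing to at most `2N`. The ℓ¹-norm of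
the coefficient vector is a submultiplicative ring seminorm on polynomials, so the Leibniz expansion
shows that `N^n d^k_λ` and `N^n d^0_λ` are integer polynomials of degree at most `n` and ℓ¹-norm at
most `n! (2N)^n`. The entries of `N^n Ẇ` are the pencil `N^n d^k - z N^n d^0`, and a second Leibniz
expansion, now in `ℤ[λ][z]`, bounds the degrees of `P` by `s` in `z` and `s n` in `λ`, and every
coefficient by `s! (2 n! (2N)^n)^s`, where `s = |S| ≤ |I|`. The bit-size estimate then follows from
`m! 2^m ≤ (m + 1)^m`.
-/

open Polynomial

namespace Polynomial

section L1Norm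

variable {R : Type*} [Ring R] (v : RingSeminorm R)

noncomputable def l1Norm (p : R[X]) : ℝ := p.sum fun _ a => v a

theorem l1Norm_eq_sum_of_support_subset {p : R[X]} {s : Finset ℕ} (hs : p.support ⊆ s) :
    l1Norm v p = ∑ i ∈ s, v (p.coeff i) :=
  sum_eq_of_subset _ (fun _ => map_zero v) hs

theorem l1Norm_zero : l1Norm v 0 = 0 := by simp [l1Norm]

theorem l1Norm_add_le (p q : R[X]) : l1Norm v (p + q) ≤ l1Norm v p + l1Norm v q := by
  classical
  rw [l1Norm_eq_sum_of_support_subset v support_add,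
    l1Norm_eq_sum_of_support_subset v Finset.subset_union_left,
    l1Norm_eq_sum_of_support_subset v Finset.subset_union_right, ← Finset.sum_add_distrib]
  exact Finset.sum_le_sum fun i _ => by simpa only [coeff_add] using map_add_le_add v _ _

theorem l1Norm_neg (p : R[X]) : l1Norm v (-p) = l1Norm v p := by
  simp [l1Norm, sum_def, support_neg, map_neg_eq_map]

theorem l1Norm_monomial (n : ℕ) (a : R) : l1Norm v (monomial n a) = v a := by
  simp [l1Norm, sum_monomial_index, map_zero]

theorem l1Norm_sum_le {ι : Type*} (s : Finset ι) (f : ι → R[X]) :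
    l1Norm v (∑ i ∈ s, f i) ≤ ∑ i ∈ s, l1Norm v (f i) :=
  Finset.le_sum_of_subadditive (l1Norm v) (l1Norm_zero v).le (l1Norm_add_le v) s f

theorem l1Norm_mul_le (p q : R[X]) : l1Norm v (p * q) ≤ l1Norm v p * l1Norm v q :=
  calc l1Norm v (p * q)
      ≤ ∑ i ∈ p.support, ∑ j ∈ q.support,
          l1Norm v (monomial (i + j) (p.coeff i * q.coeff j)) := by
        rw [mul_eq_sum_sum]
        exact (l1Norm_sum_le v _ _).trans (Finset.sum_le_sum fun i _ => l1Norm_sum_le v _ _)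
    _ ≤ ∑ i ∈ p.support, ∑ j ∈ q.support, v (p.coeff i) * v (q.coeff j) := by
        gcongr with i _ j _
        rw [l1Norm_monomial]
        exact map_mul_le_mul v _ _
    _ = l1Norm v p * l1Norm v q := by rw [l1Norm, l1Norm, sum_def, sum_def, Finset.sum_mul_sum]

noncomputable def l1Seminorm : RingSeminorm R[X] where
  toFun := l1Norm v
  map_zero' := l1Norm_zero v
  add_le' := l1Norm_add_le v
  neg' := l1Norm_neg v
  mul_le' := l1Norm_mul_le v

theorem l1Seminorm_monomial (n : ℕ) (a : R) : l1Seminorm v (monomial n a) = v a :=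
  l1Norm_monomial v n a

theorem l1Seminorm_C (a : R) : l1Seminorm v (C a) = v a := l1Norm_monomial v 0 a

theorem le_l1Seminorm (p : R[X]) (i : ℕ) : v (p.coeff i) ≤ l1Seminorm v p := by
  classical
  by_cases hi : i ∈ p.support
  · exact Finset.single_le_sum (f := fun j => v (p.coeff j)) (fun _ _ => apply_nonneg v _) hi
  · rw [notMem_support_iff.mp hi, map_zero]
    exact apply_nonneg _ _

end L1Norm

namespace Bivariate

variable {R : Type*} [CommSemiring R]

theorem coeff_coeff_swap (p : R[X][X]) (i j : ℕ) :
    ((swap p).coeff i).coeff j = (p.coeff j).coeff i := by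
  induction p using Polynomial.induction_on' with
  | add p q hp hq => simp [hp, hq]
  | monomial n f =>
    induction f using Polynomial.induction_on' with
    | add f g hf hg => simp [hf, hg]
    | monomial m r =>
      rw [swap_monomial_monomial]
      by_cases hm : m = i <;> by_cases hn : n = j <;> simp [coeff_monomial, hm, hn]

theorem natDegree_swap_le_iff (p : R[X][X]) (d : ℕ) :
    (swap p).natDegree ≤ d ↔ ∀ i, (p.coeff i).natDegree ≤ d := by
  simp only [natDegree_le_iff_coeff_eq_zero]
  constructor
  · intro h i j hj
    rw [← coeff_coeff_swap, h j hj, coeff_zero]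
  · intro h j hj
    ext i
    rw [coeff_coeff_swap, h i j hj, coeff_zero]

end Bivariate

end Polynomial

namespace RingSeminorm

variable {R : Type*} [CommRing R] (v : RingSeminorm R)

theorem map_prod_le (hv : v 1 ≤ 1) {ι : Type*} (s : Finset ι) (f : ι → R) :
    v (∏ i ∈ s, f i) ≤ ∏ i ∈ s, v (f i) := by
  induction s using Finset.cons_induction with
  | empty => simpa using hv
  | cons a s ha ih =>
    rw [Finset.prod_cons, Finset.prod_cons]
    exact (map_mul_le_mul v _ _).trans (mul_le_mul_of_nonneg_left ih (apply_nonneg v _))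

theorem map_det_le (hv : v 1 ≤ 1) {m : Type*} [Fintype m] [DecidableEq m] (M : Matrix m m R)
    {c : ℝ} (h : ∀ i j, v (M i j) ≤ c) :
    v M.det ≤ (Fintype.card m).factorial * c ^ Fintype.card m := by
  have hsign (σ : Equiv.Perm m) (x : R) : v (Equiv.Perm.sign σ • x) = v x := by
    rcases Int.units_eq_one_or (Equiv.Perm.sign σ) with hσ | hσ <;> simp [hσ, map_neg_eq_map]
  calc v M.det ≤ ∑ σ : Equiv.Perm m, v (Equiv.Perm.sign σ • ∏ i, M (σ i) i) := by
        rw [Matrix.det_apply]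
        exact Finset.le_sum_of_subadditive v (map_zero v).le (map_add_le_add v) _ _
    _ ≤ ∑ σ : Equiv.Perm m, ∏ i, v (M (σ i) i) := by
        gcongr with σ
        rw [hsign]
        exact v.map_prod_le hv _ _
    _ ≤ ∑ _σ : Equiv.Perm m, ∏ _i : m, c := by
        gcongr with σ _ i
        exact h _ _
    _ = (Fintype.card m).factorial * c ^ Fintype.card m := by simp [Fintype.card_perm]

end RingSeminorm

-- `r / 0 = 0` in `ℝ`, but then `r ≤ N = 0` forces `r = 0`, so `N * (r / N) = r` still holds.
theorem exists_natCast_eq_mul_of_eq_div {N : ℕ} {x : ℝ} (hx : ∃ r : ℕ, r ≤ N ∧ x = r / N) :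
    ∃ r : ℕ, r ≤ N ∧ (r : ℝ) = N * x := by
  obtain ⟨r, hr, rfl⟩ := hx
  refine ⟨r, hr, (mul_div_cancel_of_imp' fun hN => ?_).symm⟩
  exact_mod_cast Nat.eq_zero_of_le_zero (hr.trans (by exact_mod_cast hN.le))

namespace Matrix

theorem natDegree_det_le {m : Type*} [Fintype m] [DecidableEq m] {R : Type*} [CommRing R]
    (M : Matrix m m R[X]) {d : ℕ} (h : ∀ i j, (M i j).natDegree ≤ d) :
    M.det.natDegree ≤ Fintype.card m * d := by
  rw [det_apply]
  refine natDegree_sum_le_of_forall_le _ _ fun σ _ => ?_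
  calc (Equiv.Perm.sign σ • ∏ i, M (σ i) i).natDegree
      ≤ (∏ i, M (σ i) i).natDegree := by
        rw [Units.smul_def]
        exact natDegree_smul_le _ _
    _ ≤ ∑ i, (M (σ i) i).natDegree := natDegree_prod_le _ _
    _ ≤ Fintype.card m * d := by
        have := Finset.sum_le_card_nsmul Finset.univ _ d fun i _ => h (σ i) i
        rwa [Finset.card_univ, smul_eq_mul] at this

theorem forall_updateCol_apply {m α : Type*} [DecidableEq m] {p : α → Prop} {M : Matrix m m α}
    {j : m} {u : m → α} (hM : ∀ i l, p (M i l)) (hu : ∀ i, p (u i)) (i l : m) :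
    p (updateCol M j u i l) := by
  rw [updateCol_apply]
  split_ifs
  exacts [hu i, hM i l]

theorem updateCol_smul_smul {m α : Type*} [DecidableEq m] [Mul α] (M : Matrix m m α) (j : m)
    (a : α) (u : m → α) : updateCol (a • M) j (a • u) = a • updateCol M j u := by
  ext i l
  by_cases h : l = j <;> simp [h]

section DiscountPoly

variable {m : Type*} [DecidableEq m] {R S : Type*} [CommRing R] [CommRing S]

/-- `c • Id - (1 - λ) • M` over `R[λ]`: `d^0_λ(𝐢,𝐣)` is the determinant of
`discountPoly 1 Q(𝐢,𝐣)`, and `d^k_λ(𝐢,𝐣)` that of the same matrix with column `k` replaced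
by `g(𝐢,𝐣)`. -/
noncomputable def discountPoly (c : R) (M : Matrix m m R) : Matrix m m R[X] :=
  (C c : R[X]) • (1 : Matrix m m R[X]) - (1 - X : R[X]) • M.map C

theorem discountPoly_apply (c : R) (M : Matrix m m R) (i j : m) :
    discountPoly c M i j = C ((c • 1 - M) i j) + X * C (M i j) := by
  by_cases h : i = j <;> simp [discountPoly, h] <;> ring

theorem discountPoly_one (M : Matrix m m R) :
    discountPoly 1 M = (1 : Matrix m m R[X]) - (1 - X : R[X]) • of fun i j => C (M i j) := by
  rw [discountPoly, map_one, one_smul]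
  rfl

theorem natDegree_discountPoly_apply_le (c : R) (M : Matrix m m R) (i j : m) :
    (discountPoly c M i j).natDegree ≤ 1 := by
  rw [discountPoly_apply]
  refine (natDegree_add_le _ _).trans (max_le (by rw [natDegree_C]; exact zero_le_one) ?_)
  rw [X_mul_C]
  exact (natDegree_C_mul_le _ _).trans natDegree_X_le

theorem map_discountPoly (f : R →+* S) (c : R) (M : Matrix m m R) :
    (discountPoly c M).map (mapRingHom f) = discountPoly (f c) (M.map f) := by
  refine Matrix.ext fun i j => ?_
  by_cases h : i = j <;> simp [discountPoly_apply, h]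

theorem discountPoly_smul (a c : R) (M : Matrix m m R) :
    discountPoly (a * c) (a • M) = C a • discountPoly c M := by
  refine Matrix.ext fun i j => ?_
  by_cases h : i = j <;> simp [discountPoly_apply, h] <;> ring

theorem l1Seminorm_discountPoly_apply_le (N : ℕ) (Z : Matrix m m ℤ)
    (hZ : ∀ i j, 0 ≤ Z i j ∧ Z i j ≤ N) (i j : m) :
    l1Seminorm (normRingSeminorm ℤ) (discountPoly (N : ℤ) Z i j) ≤ 2 * N := by
  rw [discountPoly_apply, X_mul_C, C_mul_X_eq_monomial]
  refine (map_add_le_add _ _ _).trans ?_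
  rw [l1Seminorm_C, l1Seminorm_monomial]
  change ‖(_ : ℤ)‖ + ‖(_ : ℤ)‖ ≤ _
  rw [Int.norm_eq_abs, Int.norm_eq_abs, ← Int.cast_abs, ← Int.cast_abs]
  obtain ⟨h0, hN⟩ := hZ i j
  have hdiag : |((N : ℤ) • (1 : Matrix m m ℤ) - Z) i j| ≤ N := by
    rw [sub_apply, smul_apply, one_apply, abs_le]
    split_ifs <;> constructor <;> simp <;> omega
  have hZij : |Z i j| ≤ N := abs_le.2 ⟨by omega, hN⟩
  exact_mod_cast (by linarith : |((N : ℤ) • (1 : Matrix m m ℤ) - Z) i j| + |Z i j| ≤ 2 * N)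

variable [Fintype m]

theorem map_det_discountPoly (f : R →+* S) (c : R) (M : Matrix m m R) (Q : Matrix m m S)
    (hM : M.map f = f c • Q) :
    (discountPoly c M).det.map f = C (f c ^ Fintype.card m) * (discountPoly 1 Q).det := by
  have hscale := discountPoly_smul (f c) 1 Q
  rw [mul_one] at hscale
  rw [← coe_mapRingHom, RingHom.map_det, RingHom.mapMatrix_apply, map_discountPoly, hM, hscale,
    det_smul, C_pow]

theorem map_det_updateCol_discountPoly (f : R →+* S) (c : R) (M : Matrix m m R)
    (Q : Matrix m m S) (hM : M.map f = f c • Q) (k : m) (w : m → R) (u : m → S)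
    (hw : ∀ i, f (w i) = f c * u i) :
    (updateCol (discountPoly c M) k fun i => C (w i)).det.map f =
      C (f c ^ Fintype.card m) * (updateCol (discountPoly 1 Q) k fun i => C (u i)).det := by
  have hscale := discountPoly_smul (f c) 1 Q
  rw [mul_one] at hscale
  have hcol : (mapRingHom f ∘ fun i => C (w i)) = C (f c) • fun i => C (u i) := by
    ext1 i
    simp [hw]
  rw [← coe_mapRingHom, RingHom.map_det, RingHom.mapMatrix_apply, map_updateCol,
    map_discountPoly, hM, hscale, hcol, updateCol_smul_smul, det_smul, C_pow]

theorem exists_int_scaled_det_discountPoly (N : ℕ) (Q : Matrix m m ℝ) (u : m → ℝ) (k : m)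
    (hQ : ∀ i j, ∃ r : ℕ, r ≤ N ∧ Q i j = r / N) (hu : ∀ i, ∃ r : ℕ, r ≤ N ∧ u i = r / N) :
    ∃ a b : ℤ[X],
      a.map (Int.castRingHom ℝ) =
        C ((N : ℝ) ^ Fintype.card m) * (updateCol (discountPoly 1 Q) k fun i => C (u i)).det ∧
      b.map (Int.castRingHom ℝ) = C ((N : ℝ) ^ Fintype.card m) * (discountPoly 1 Q).det ∧
      a.natDegree ≤ Fintype.card m ∧ b.natDegree ≤ Fintype.card m ∧
      l1Seminorm (normRingSeminorm ℤ) a ≤ (Fintype.card m).factorial * (2 * N) ^ Fintype.card m ∧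
      l1Seminorm (normRingSeminorm ℤ) b ≤ (Fintype.card m).factorial * (2 * N) ^ Fintype.card m := by
  choose Z hZN hZ using fun i j => exists_natCast_eq_mul_of_eq_div (hQ i j)
  choose w hwN hw using fun i => exists_natCast_eq_mul_of_eq_div (hu i)
  set M : Matrix m m ℤ := of fun i j => Z i j
  have hM : M.map (Int.castRingHom ℝ) = (Int.castRingHom ℝ) N • Q := by
    ext i j
    simp [M, hZ]
  have hMbound (i j : m) : 0 ≤ M i j ∧ M i j ≤ N := ⟨by simp [M], by simp [M, hZN]⟩
  have hcol (i : m) : l1Seminorm (normRingSeminorm ℤ) (C (w i : ℤ)) ≤ 2 * N := by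
    rw [l1Seminorm_C]
    change ‖((w i : ℕ) : ℤ)‖ ≤ _
    rw [Int.norm_natCast]
    exact_mod_cast (hwN i).trans (Nat.le_mul_of_pos_left N two_pos)
  have hone : l1Seminorm (normRingSeminorm ℤ) 1 ≤ 1 := by
    rw [← C_1, l1Seminorm_C]
    exact (norm_one (α := ℤ)).le
  refine ⟨(updateCol (discountPoly (N : ℤ) M) k fun i => C (w i : ℤ)).det,
    (discountPoly (N : ℤ) M).det, ?_, ?_, ?_, ?_, ?_, ?_⟩
  · simpa using map_det_updateCol_discountPoly (Int.castRingHom ℝ) N M Q hM k (fun i => w i) u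
      (by simp [hw])
  · simpa using map_det_discountPoly (Int.castRingHom ℝ) N M Q hM
  · exact (natDegree_det_le _ (forall_updateCol_apply (p := fun x : ℤ[X] => x.natDegree ≤ 1)
      (natDegree_discountPoly_apply_le _ _) fun i => (natDegree_C _).trans_le zero_le_one)).trans_eq
      (mul_one _)
  · exact (natDegree_det_le _ (natDegree_discountPoly_apply_le _ _)).trans_eq (mul_one _)
  · exact (l1Seminorm (normRingSeminorm ℤ)).map_det_le hone _
      (forall_updateCol_apply (p := fun x => l1Seminorm (normRingSeminorm ℤ) x ≤ 2 * N)
        (l1Seminorm_discountPoly_apply_le N M hMbound) hcol)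
  · exact (l1Seminorm (normRingSeminorm ℤ)).map_det_le hone _ (l1Seminorm_discountPoly_apply_le N M hMbound)

end DiscountPoly

section Pencil

variable {ι : Type*} {R : Type*} [CommRing R]

noncomputable def pencil (A B : Matrix ι ι R) : Matrix ι ι R[X] :=
  A.map C - (X : R[X]) • B.map C

theorem pencil_apply (A B : Matrix ι ι R) (i j : ι) :
    pencil A B i j = C (A i j) - X * C (B i j) := rfl

variable [Fintype ι] [DecidableEq ι]

theorem natDegree_det_pencil_le (A B : Matrix ι ι R) :
    (pencil A B).det.natDegree ≤ Fintype.card ι := by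
  simpa using natDegree_det_le (pencil A B) (d := 1) fun i j => by
    rw [pencil_apply]
    refine (natDegree_sub_le _ _).trans (max_le (by simp) ?_)
    rw [X_mul_C]
    exact (natDegree_C_mul_le _ _).trans natDegree_X_le

theorem natDegree_coeff_det_pencil_le (A B : Matrix ι ι R[X]) {d : ℕ}
    (hA : ∀ i j, (A i j).natDegree ≤ d) (hB : ∀ i j, (B i j).natDegree ≤ d) (k : ℕ) :
    ((pencil A B).det.coeff k).natDegree ≤ Fintype.card ι * d := by
  revert k
  rw [← Bivariate.natDegree_swap_le_iff, AlgEquiv.map_det]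
  refine natDegree_det_le _ fun i j => ?_
  simp only [AlgEquiv.mapMatrix_apply, map_apply, pencil_apply, map_sub, map_mul,
    Bivariate.swap_C, Bivariate.swap_Y]
  exact (natDegree_sub_le _ _).trans (max_le (natDegree_map_le.trans (hA i j))
    ((natDegree_C_mul_le _ _).trans (natDegree_map_le.trans (hB i j))))

theorem seminorm_coeff_coeff_det_pencil_le (v : RingSeminorm R) (hv : v 1 ≤ 1)
    (A B : Matrix ι ι R[X]) {c : ℝ} (hA : ∀ i j, l1Seminorm v (A i j) ≤ c)
    (hB : ∀ i j, l1Seminorm v (B i j) ≤ c) (k l : ℕ) :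
    v (((pencil A B).det.coeff k).coeff l) ≤
      (Fintype.card ι).factorial * (2 * c) ^ Fintype.card ι := by
  have hv₂ : l1Seminorm (l1Seminorm v) 1 ≤ 1 := by
    rw [← C_1, l1Seminorm_C, ← C_1, l1Seminorm_C]
    exact hv
  have hentry (i j : ι) : l1Seminorm (l1Seminorm v) (pencil A B i j) ≤ 2 * c := by
    rw [pencil_apply, X_mul_C, C_mul_X_eq_monomial]
    calc _ ≤ l1Seminorm (l1Seminorm v) (C (A i j)) +
          l1Seminorm (l1Seminorm v) (monomial 1 (B i j)) := map_sub_le_add _ _ _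
      _ ≤ 2 * c := by
        rw [l1Seminorm_C, l1Seminorm_monomial]
        linarith [hA i j, hB i j]
  calc v (((pencil A B).det.coeff k).coeff l)
      ≤ l1Seminorm v ((pencil A B).det.coeff k) := le_l1Seminorm v _ l
    _ ≤ l1Seminorm (l1Seminorm v) (pencil A B).det := le_l1Seminorm _ _ k
    _ ≤ _ := (l1Seminorm (l1Seminorm v)).map_det_le hv₂ _ hentry

end Pencil

end Matrix

theorem Nat.factorial_mul_two_pow_le (m : ℕ) : m.factorial * 2 ^ m ≤ (m + 1) ^ m := by
  induction m with
  | zero => simp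
  | succ m ih =>
    have bernoulli : 2 * (m + 1) ^ (m + 1) ≤ (m + 2) ^ (m + 1) := by
      have := pow_add_mul_le_add_pow (a := m + 1) (b := 1) (by positivity) (by positivity) (m + 1)
      rw [Nat.add_sub_cancel, mul_one] at this
      calc 2 * (m + 1) ^ (m + 1) = (m + 1) ^ (m + 1) + (m + 1) * (m + 1) ^ m := by ring
        _ ≤ (m + 2) ^ (m + 1) := this
    calc (m + 1).factorial * 2 ^ (m + 1) = 2 * (m + 1) * (m.factorial * 2 ^ m) := by
          rw [Nat.factorial_succ]; ring
      _ ≤ 2 * (m + 1) * (m + 1) ^ m := by gcongr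
      _ = 2 * (m + 1) ^ (m + 1) := by ring
      _ ≤ (m + 2) ^ (m + 1) := bernoulli

theorem lt_two_pow_bitsize (p : ℕ) : p < 2 ^ bitsize p := Nat.le_pow_clog one_lt_two _

theorem factorial_mul_two_pow_le_two_pow_bitsize (m : ℕ) :
    m.factorial * 2 ^ m ≤ 2 ^ (m * bitsize m) :=
  calc m.factorial * 2 ^ m ≤ (m + 1) ^ m := Nat.factorial_mul_two_pow_le m
    _ ≤ (2 ^ bitsize m) ^ m := Nat.pow_le_pow_left (lt_two_pow_bitsize m) m
    _ = 2 ^ (m * bitsize m) := by rw [← pow_mul, mul_comm]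

theorem factorial_mul_pow_lt_two_pow_bitsize {s I : ℕ} (hs : s ≤ I) (n N : ℕ) :
    s.factorial * (2 * (n.factorial * (2 * N) ^ n)) ^ s <
      2 ^ (I * n * bitsize n + I * n * bitsize N + I * bitsize I + 2 * bitsize (I * n + 1)) := by
  set γ := 2 ^ (n * bitsize n + n * bitsize N) with hγ
  have hbase : 2 * (n.factorial * (2 * N) ^ n) ≤ 2 * γ :=
    calc 2 * (n.factorial * (2 * N) ^ n) = 2 * (n.factorial * 2 ^ n) * N ^ n := by ring
      _ ≤ 2 * 2 ^ (n * bitsize n) * (2 ^ bitsize N) ^ n := by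
        gcongr
        exacts [factorial_mul_two_pow_le_two_pow_bitsize n, (lt_two_pow_bitsize N).le]
      _ = 2 * γ := by rw [hγ, pow_add, ← pow_mul, mul_comm (bitsize N)]; ring
  have hbit : 1 ≤ bitsize (I * n + 1) := Nat.clog_pos one_lt_two (by omega)
  calc s.factorial * (2 * (n.factorial * (2 * N) ^ n)) ^ s
      ≤ s.factorial * (2 * γ) ^ s := by gcongr
    _ = (s.factorial * 2 ^ s) * γ ^ s := by ring
    _ ≤ (I.factorial * 2 ^ I) * γ ^ I :=
      Nat.mul_le_mul (Nat.mul_le_mul (Nat.factorial_le hs) (Nat.pow_le_pow_right two_pos hs))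
        (Nat.pow_le_pow_right Nat.one_le_two_pow hs)
    _ ≤ 2 ^ (I * bitsize I) * γ ^ I := by
      gcongr
      exact factorial_mul_two_pow_le_two_pow_bitsize I
    _ = 2 ^ (I * n * bitsize n + I * n * bitsize N + I * bitsize I) := by
      rw [hγ, ← pow_mul, ← pow_add]
      ring_nf
    _ < _ := Nat.pow_lt_pow_right one_lt_two (by omega)

theorem stmt6_general
    {n : ℕ}
    {A B : Fin n → Type*} [∀ k, Fintype (A k)]
    [∀ k, DecidableEq (A k)]
    (g : (k : Fin n) → A k → B k → ℝ)
    (q : (k : Fin n) → A k → B k → Fin n → ℝ)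
    (N : ℕ)
    (hgN : ∀ k i j, ∃ m : ℕ, m ≤ N ∧ g k i j = (m : ℝ) / N)
    (hqN : ∀ k i j l, ∃ m : ℕ, m ≤ N ∧ q k i j l = (m : ℝ) / N)
    (k : Fin n)
    (S : Finset ((k : Fin n) → A k)) (T : Finset ((k : Fin n) → B k))
    (e : {x // x ∈ S} ≃ {y // y ∈ T}) :
    ∃ Qp : Polynomial (Polynomial ℤ),
      Matrix.det (Matrix.of fun a b : {x // x ∈ S} =>
          Polynomial.C (Polynomial.C ((N : ℝ) ^ n)) * WmatPoly g q k a.1 (e b).1)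
        = Qp.map (Polynomial.mapRingHom (Int.castRingHom ℝ)) ∧
      Qp.natDegree ≤ Fintype.card ((k : Fin n) → A k) * n ∧
      (∀ i, (Qp.coeff i).natDegree ≤ Fintype.card ((k : Fin n) → A k) * n) ∧
      ∀ i j, |(Qp.coeff i).coeff j| ≤
        2 ^ (Fintype.card ((k : Fin n) → A k) * n * bitsize n
          + Fintype.card ((k : Fin n) → A k) * n * bitsize N
          + Fintype.card ((k : Fin n) → A k) * bitsize (Fintype.card ((k : Fin n) → A k))
          + 2 * bitsize (Fintype.card ((k : Fin n) → A k) * n + 1)) - 1 := by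
  choose dk d0 hdk hd0 hdk_deg hd0_deg hdk_l1 hd0_l1 using
    fun (ii : (l : Fin n) → A l) (jj : (l : Fin n) → B l) =>
      Matrix.exists_int_scaled_det_discountPoly N (Matrix.of fun l l' => q l (ii l) (jj l) l')
        (fun l => g l (ii l) (jj l)) k (fun _ _ => hqN _ _ _ _) (fun _ => hgN _ _ _)
  simp only [Fintype.card_fin] at hdk hd0 hdk_deg hd0_deg hdk_l1 hd0_l1
  set Dk : Matrix S S ℤ[X] := Matrix.of fun x y => dk x.1 (e y).1
  set D0 : Matrix S S ℤ[X] := Matrix.of fun x y => d0 x.1 (e y).1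
  have hcard : Fintype.card S ≤ Fintype.card ((k : Fin n) → A k) :=
    (Fintype.card_coe S).trans_le (Finset.card_le_univ S)
  refine ⟨(Matrix.pencil Dk D0).det, ?_, ?_, fun i => ?_, fun i j => ?_⟩
  · rw [← coe_mapRingHom, RingHom.map_det]
    refine congrArg Matrix.det (Matrix.ext fun x y => ?_)
    simp only [RingHom.mapMatrix_apply, Matrix.map_apply, Matrix.pencil_apply, Dk, D0,
      Matrix.of_apply, coe_mapRingHom, Polynomial.map_sub, Polynomial.map_mul, map_X, map_C, hdk,
      hd0, Matrix.discountPoly_one, WmatPoly, C_mul]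
    ring
  · exact (Matrix.natDegree_det_pencil_le Dk D0).trans
      (hcard.trans (Nat.le_mul_of_pos_right _ k.pos))
  · exact (Matrix.natDegree_coeff_det_pencil_le Dk D0 (fun _ _ => hdk_deg _ _)
      (fun _ _ => hd0_deg _ _) i).trans (Nat.mul_le_mul_right n hcard)
  · rw [Int.le_sub_one_iff, ← Int.cast_lt (R := ℝ), Int.cast_abs, ← Int.norm_eq_abs]
    refine (Matrix.seminorm_coeff_coeff_det_pencil_le (normRingSeminorm ℤ) (norm_one (α := ℤ)).le
      Dk D0 (fun _ _ => hdk_l1 _ _) (fun _ _ => hd0_l1 _ _) i j).trans_lt ?_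
    exact_mod_cast factorial_mul_pow_lt_two_pow_bitsize hcard n N

/-- Under (H_N), for any square sub-matrix Ẇ of W^k (rows S ⊆ I, columns T ⊆ J,
|S| = |T| ≥ 1), P(λ,z) := det(N^n·Ẇ) is a polynomial with integer coefficients, of degree at
most |I|·n in λ and in z, whose coefficients have bit-size at most
f(|I|,n,N) := |I|·n·bit(n)+|I|·n·bit(N)+|I|·bit(|I|)+2·bit(|I|·n+1). -/
theorem stmt6
    {n : ℕ} (hn : 1 ≤ n)
    {A B : Fin n → Type*} [∀ k, Fintype (A k)] [∀ k, Fintype (B k)]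
    [∀ k, Nonempty (A k)] [∀ k, Nonempty (B k)]
    [∀ k, DecidableEq (A k)] [∀ k, DecidableEq (B k)]
    (g : (k : Fin n) → A k → B k → ℝ)
    (q : (k : Fin n) → A k → B k → Fin n → ℝ)
    (hq0 : ∀ k i j l, 0 ≤ q k i j l)
    (hq1 : ∀ k i j, ∑ l, q k i j l = 1)
    (N : ℕ) (hN : 1 ≤ N)
    (hgN : ∀ k i j, ∃ m : ℕ, m ≤ N ∧ g k i j = (m : ℝ) / N)
    (hqN : ∀ k i j l, ∃ m : ℕ, m ≤ N ∧ q k i j l = (m : ℝ) / N)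
    (k : Fin n)
    (S : Finset ((k : Fin n) → A k)) (T : Finset ((k : Fin n) → B k))
    (hST : S.card = T.card) (hS : 1 ≤ S.card)
    (e : {x // x ∈ S} ≃ {y // y ∈ T}) :
    ∃ Qp : Polynomial (Polynomial ℤ),
      Matrix.det (Matrix.of fun a b : {x // x ∈ S} =>
          Polynomial.C (Polynomial.C ((N : ℝ) ^ n)) * WmatPoly g q k a.1 (e b).1)
        = Qp.map (Polynomial.mapRingHom (Int.castRingHom ℝ)) ∧
      Qp.natDegree ≤ Fintype.card ((k : Fin n) → A k) * n ∧
      (∀ i, (Qp.coeff i).natDegree ≤ Fintype.card ((k : Fin n) → A k) * n) ∧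
      ∀ i j, |(Qp.coeff i).coeff j| ≤
        2 ^ (Fintype.card ((k : Fin n) → A k) * n * bitsize n
          + Fintype.card ((k : Fin n) → A k) * n * bitsize N
          + Fintype.card ((k : Fin n) → A k) * bitsize (Fintype.card ((k : Fin n) → A k))
          + 2 * bitsize (Fintype.card ((k : Fin n) → A k) * n + 1)) - 1 :=
  stmt6_general g q N hgN hqN k S T e
end

section
/- Fix an initial state k∈K, suppose assumption (H_N) holds, and let λ∈(0,1] with N·λ∈ℕ. Let r∈ℕ and let z∈[0,1] with 2^r·z∈ℕ. Then for every (𝐢,𝐣)∈I×J, the number 2^r·N^{2n}·W^k_λ(z)[𝐢,𝐣] is an integer, and |W^k_λ(z)[𝐢,𝐣]| ≤ 2·n^{n/2}. -/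
open Filter Set Topology

/-!
Write `M = 1 - (1 - λ) Q(𝐢,𝐣)`. Since the determinant is linear in the `k`-th column,
`W^k_λ(z)[𝐢,𝐣]` is the determinant of `M` with its `k`-th column replaced by `g(𝐢,𝐣) - z M_{·k}`.
The entries of `M` lie in `[-1, 1]` and those of the new column in `[-2, 2]`; halving that column
and using `|det A| ≤ n^{n/2}` for matrices with entries in `[-1, 1]` (AM-GM on the eigenvalues of
`Aᵀ A`, whose trace is at most `n²`) gives the bound. Under (H_N) and `Nλ ∈ ℕ`, multiplying `M`,
and `M` with `k`-th column `g(𝐢,𝐣)`, by `N²` gives integer matrices, so `N^{2n} d^0_λ` and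
`N^{2n} d^k_λ` are integers; `2^r z ∈ ℕ` then finishes the integrality claim.
-/

open Matrix Finset

theorem Real.prod_le_sum_div_card_pow {ι : Type*} [Fintype ι] (f : ι → ℝ) (hf : ∀ i, 0 ≤ f i) :
    ∏ i, f i ≤ ((∑ i, f i) / Fintype.card ι) ^ Fintype.card ι := by
  rcases isEmpty_or_nonempty ι with hι | hι
  · simp
  set n := Fintype.card ι
  have hn : n ≠ 0 := Fintype.card_ne_zero
  have amgm : (∏ i, f i) ^ (n⁻¹ : ℝ) ≤ ∑ i, (n : ℝ)⁻¹ * f i := by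
    rw [← Real.finsetProd_rpow _ _ fun i _ => hf i]
    refine Real.geom_mean_le_arith_mean_weighted _ _ _ (fun _ _ => by positivity) ?_
      fun i _ => hf i
    simp [n, Finset.card_univ]
  calc ∏ i, f i = ((∏ i, f i) ^ (n⁻¹ : ℝ)) ^ n :=
        (Real.rpow_inv_natCast_pow (prod_nonneg fun i _ => hf i) hn).symm
    _ ≤ ((∑ i, f i) / n) ^ n := by
        rw [← Finset.mul_sum, inv_mul_eq_div] at amgm
        exact pow_le_pow_left₀ (Real.rpow_nonneg (prod_nonneg fun i _ => hf i) _) amgm n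

theorem Matrix.PosSemidef.det_le_trace_div_card_pow {ι : Type*} [Fintype ι] [DecidableEq ι]
    {G : Matrix ι ι ℝ} (hG : G.PosSemidef) :
    G.det ≤ (G.trace / Fintype.card ι) ^ Fintype.card ι := by
  rw [hG.isHermitian.det_eq_prod_eigenvalues, hG.isHermitian.trace_eq_sum_eigenvalues]
  simpa using Real.prod_le_sum_div_card_pow _ hG.eigenvalues_nonneg

theorem Matrix.abs_det_le_sqrt_card_pow {ι : Type*} [Fintype ι] [DecidableEq ι]
    (A : Matrix ι ι ℝ) (hA : ∀ i j, |A i j| ≤ 1) :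
    |A.det| ≤ √(Fintype.card ι) ^ Fintype.card ι := by
  set n := Fintype.card ι
  have htrace : (Aᵀ * A).trace ≤ n * n := by
    calc (Aᵀ * A).trace = ∑ i, ∑ j, A j i ^ 2 := by
          simp [Matrix.trace, Matrix.mul_apply, sq]
      _ ≤ ∑ _i : ι, ∑ _j : ι, (1 : ℝ) := by
          gcongr with i _ j _
          simpa using sq_le_one_iff_abs_le_one _ |>.mpr (hA j i)
      _ = n * n := by simp [n]
  have hsq : A.det ^ 2 ≤ (n : ℝ) ^ n := by
    calc A.det ^ 2 = (Aᵀ * A).det := by rw [det_mul, det_transpose, sq]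
      _ ≤ ((Aᵀ * A).trace / n) ^ n :=
          (posSemidef_conjTranspose_mul_self A).det_le_trace_div_card_pow
      _ ≤ (n : ℝ) ^ n := by
          gcongr
          · exact div_nonneg (posSemidef_conjTranspose_mul_self A).trace_nonneg n.cast_nonneg
          · exact div_le_of_le_mul₀ (by positivity) (by positivity) htrace
  refine abs_le_of_sq_le_sq ?_ (by positivity)
  rwa [← pow_mul, mul_comm, pow_mul, Real.sq_sqrt n.cast_nonneg]

theorem det_updateCol_sub_mul_det {R ι : Type*} [CommRing R] [Fintype ι] [DecidableEq ι]
    (M : Matrix ι ι R) (k : ι) (v : ι → R) (z : R) :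
    (M.updateCol k v).det - z * M.det = (M.updateCol k fun l => v l - z * M l k).det := by
  have hcol : (fun l => v l - z * M l k) = v + (-z) • fun l => M l k := by
    ext l
    simp [sub_eq_add_neg]
  rw [hcol, det_updateCol_add, det_updateCol_smul, updateCol_eq_self]
  ring

theorem abs_det_updateCol_le {ι : Type*} [Fintype ι] [DecidableEq ι] {M : Matrix ι ι ℝ}
    (hM : ∀ i j, |M i j| ≤ 1) (k : ι) {w : ι → ℝ} (hw : ∀ i, |w i| ≤ 2) :
    |(M.updateCol k w).det| ≤ 2 * √(Fintype.card ι) ^ Fintype.card ι := by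
  have hsplit : w = (2 : ℝ) • fun i => w i / 2 := by
    ext i
    simp only [Pi.smul_apply, smul_eq_mul]
    ring
  rw [hsplit, det_updateCol_smul, abs_mul, abs_two]
  refine mul_le_mul_of_nonneg_left (abs_det_le_sqrt_card_pow _ fun i j => ?_) zero_le_two
  rw [updateCol_apply]
  split_ifs
  · rw [abs_div, abs_two, div_le_one two_pos]
    exact hw i
  · exact hM i j

theorem abs_one_sub_smul_apply_le_one {ι : Type*} [DecidableEq ι] {c : ℝ} {P : Matrix ι ι ℝ}
    (hc : c ∈ Set.Icc 0 1) (hP : ∀ i j, P i j ∈ Set.Icc 0 1) (i j : ι) :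
    |(1 - c • P) i j| ≤ 1 := by
  have h0 : 0 ≤ c * P i j := mul_nonneg hc.1 (hP i j).1
  have h1 : c * P i j ≤ 1 := mul_le_one₀ hc.2 (hP i j).1 (hP i j).2
  rw [Matrix.sub_apply, Matrix.smul_apply, smul_eq_mul, one_apply, abs_le]
  split_ifs <;> constructor <;> linarith

theorem abs_det_updateCol_sub_mul_det_le {ι : Type*} [Fintype ι] [DecidableEq ι]
    {M : Matrix ι ι ℝ} (hM : ∀ i j, |M i j| ≤ 1) (k : ι) {v : ι → ℝ} (hv : ∀ i, |v i| ≤ 1)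
    {z : ℝ} (hz : |z| ≤ 1) :
    |(M.updateCol k v).det - z * M.det| ≤ 2 * √(Fintype.card ι) ^ Fintype.card ι := by
  rw [det_updateCol_sub_mul_det]
  refine abs_det_updateCol_le hM k fun i => ?_
  calc |v i - z * M i k| ≤ |v i| + |z| * |M i k| := by rw [← abs_mul]; exact abs_sub _ _
    _ ≤ 1 + 1 * 1 := add_le_add (hv i) (mul_le_mul hz (hM i k) (abs_nonneg _) zero_le_one)
    _ = 2 := by norm_num

theorem Subring.det_mem {R ι : Type*} [CommRing R] [Fintype ι] [DecidableEq ι] (S : Subring R)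
    {M : Matrix ι ι R} (hM : ∀ i j, M i j ∈ S) : M.det ∈ S := by
  rw [det_apply]
  exact S.sum_mem fun σ _ => Subring.zsmul_mem _ (S.prod_mem fun i _ => hM _ _) _

theorem Subring.pow_card_mul_det_mem {R ι : Type*} [CommRing R] [Fintype ι] [DecidableEq ι]
    (S : Subring R) {c : R} {M : Matrix ι ι R} (hM : ∀ i j, c * M i j ∈ S) :
    c ^ Fintype.card ι * M.det ∈ S := by
  rw [← det_smul]
  exact S.det_mem hM

theorem Subring.sq_mul_one_sub_smul_apply_mem {R ι : Type*} [CommRing R] [DecidableEq ι]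
    (S : Subring R) {x c : R} {P : Matrix ι ι R} (hx : x ∈ S) (hxc : x * c ∈ S)
    (hxP : ∀ i j, x * P i j ∈ S) (i j : ι) : x ^ 2 * (1 - c • P) i j ∈ S := by
  have : x ^ 2 * (1 - c • P) i j = x ^ 2 * (1 : Matrix ι ι R) i j - x * c * (x * P i j) := by
    simp only [Matrix.sub_apply, Matrix.smul_apply, smul_eq_mul]
    ring
  rw [this, one_apply]
  refine S.sub_mem (S.mul_mem (S.pow_mem hx 2) ?_) (S.mul_mem hxc (hxP i j))
  split_ifs
  exacts [S.one_mem, S.zero_mem]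

theorem Subring.mul_pow_mul_det_updateCol_sub_mul_det_mem {R ι : Type*} [CommRing R]
    [Fintype ι] [DecidableEq ι] (S : Subring R) {x c y z : R} {P : Matrix ι ι R} {v : ι → R}
    (k : ι) (hx : x ∈ S) (hxc : x * c ∈ S) (hxP : ∀ i j, x * P i j ∈ S) (hxv : ∀ i, x * v i ∈ S)
    (hy : y ∈ S) (hyz : y * z ∈ S) :
    y * x ^ (2 * Fintype.card ι) * (((1 - c • P).updateCol k v).det - z * (1 - c • P).det)
      ∈ S := by
  have hM := S.sq_mul_one_sub_smul_apply_mem hx hxc hxP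
  have hMv : ∀ i j, x ^ 2 * (1 - c • P).updateCol k v i j ∈ S := fun i j => by
    rw [updateCol_apply]
    split_ifs
    · rw [sq, mul_assoc]
      exact S.mul_mem hx (hxv i)
    · exact hM i j
  have hsplit :
      y * x ^ (2 * Fintype.card ι) * (((1 - c • P).updateCol k v).det - z * (1 - c • P).det)
      = y * ((x ^ 2) ^ Fintype.card ι * ((1 - c • P).updateCol k v).det)
        - y * z * ((x ^ 2) ^ Fintype.card ι * (1 - c • P).det) := by
    ring
  rw [hsplit]
  exact S.sub_mem (S.mul_mem hy (S.pow_card_mul_det_mem hMv))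
    (S.mul_mem hyz (S.pow_card_mul_det_mem hM))

theorem natCast_mul_div_natCast_mem_bot (m N : ℕ) : (N : ℝ) * (m / N) ∈ (⊥ : Subring ℝ) := by
  rcases N.eq_zero_or_pos with rfl | hN
  · simp
  · rw [mul_div_cancel₀ _ (by positivity)]
    exact natCast_mem _ m

theorem mem_Icc_of_exists_eq_div {N : ℕ} {x : ℝ} (h : ∃ m : ℕ, m ≤ N ∧ x = (m : ℝ) / N) :
    x ∈ Set.Icc 0 1 := by
  obtain ⟨m, hm, rfl⟩ := h
  exact ⟨by positivity, div_le_one_of_le₀ (by exact_mod_cast hm) N.cast_nonneg⟩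

theorem stmt7_general
    {n : ℕ}
    {A B : Fin n → Type*} [∀ k, Fintype (A k)] [∀ k, Fintype (B k)]
    (g : (k : Fin n) → A k → B k → ℝ)
    (q : (k : Fin n) → A k → B k → Fin n → ℝ)
    (N : ℕ)
    (hgN : ∀ k i j, ∃ m : ℕ, m ≤ N ∧ g k i j = (m : ℝ) / N)
    (hqN : ∀ k i j l, ∃ m : ℕ, m ≤ N ∧ q k i j l = (m : ℝ) / N)
    (k : Fin n)
    (lam : ℝ) (hlam : lam ∈ Set.Ioc (0:ℝ) 1) (hNlam : ∃ m : ℕ, (m : ℝ) = N * lam)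
    (r : ℕ) (z : ℝ) (hz : z ∈ Set.Icc (0:ℝ) 1) (hz2 : ∃ m : ℕ, (m : ℝ) = 2 ^ r * z) :
    ∀ (ii : (k : Fin n) → A k) (jj : (k : Fin n) → B k),
      (∃ a : ℤ, (a : ℝ) = 2 ^ r * (N : ℝ) ^ (2 * n) * Wmat g q k lam z ii jj) ∧
      |Wmat g q k lam z ii jj| ≤ 2 * Real.sqrt n ^ n := by
  intro ii jj
  set P : Matrix (Fin n) (Fin n) ℝ := Matrix.of fun l l' => q l (ii l) (jj l) l'
  set v : Fin n → ℝ := fun l => g l (ii l) (jj l)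
  have hW : Wmat g q k lam z ii jj
      = ((1 - (1 - lam) • P).updateCol k v).det - z * (1 - (1 - lam) • P).det := rfl
  rw [hW]
  constructor
  · obtain ⟨mlam, hmlam⟩ := hNlam
    obtain ⟨mz, hmz⟩ := hz2
    have hNP : ∀ l l', (N : ℝ) * q l (ii l) (jj l) l' ∈ (⊥ : Subring ℝ) := fun l l' => by
      obtain ⟨m, -, hm⟩ := hqN l (ii l) (jj l) l'
      exact hm ▸ natCast_mul_div_natCast_mem_bot m N
    have hNv : ∀ l, (N : ℝ) * g l (ii l) (jj l) ∈ (⊥ : Subring ℝ) := fun l => by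
      obtain ⟨m, -, hm⟩ := hgN l (ii l) (jj l)
      exact hm ▸ natCast_mul_div_natCast_mem_bot m N
    have hNc : (N : ℝ) * (1 - lam) ∈ (⊥ : Subring ℝ) := by
      rw [mul_one_sub, ← hmlam]
      exact sub_mem (natCast_mem _ N) (natCast_mem _ mlam)
    rw [← Subring.mem_bot]
    simpa only [Fintype.card_fin, Nat.cast_ofNat] using
      (⊥ : Subring ℝ).mul_pow_mul_det_updateCol_sub_mul_det_mem (P := P) (v := v) k
        (natCast_mem _ N) hNc hNP hNv (pow_mem (natCast_mem _ 2) r) (hmz ▸ natCast_mem _ mz)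
  · have habs : ∀ {x : ℝ}, x ∈ Set.Icc 0 1 → |x| ≤ 1 := fun hx =>
      (abs_of_nonneg hx.1).trans_le hx.2
    have hM : ∀ i j, |(1 - (1 - lam) • P) i j| ≤ 1 :=
      abs_one_sub_smul_apply_le_one ⟨sub_nonneg.mpr hlam.2, sub_le_self 1 hlam.1.le⟩
        fun l l' => mem_Icc_of_exists_eq_div (hqN l (ii l) (jj l) l')
    simpa using abs_det_updateCol_sub_mul_det_le hM k
      (fun l => habs (mem_Icc_of_exists_eq_div (hgN l (ii l) (jj l)))) (habs hz)

/-- Under (H_N), for λ ∈ (0,1] with N·λ ∈ ℕ, r ∈ ℕ and z ∈ [0,1] with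
2^r·z ∈ ℕ, every entry of W^k_λ(z) becomes an integer after multiplication by 2^r·N^{2n},
and has absolute value at most 2·n^{n/2}. -/
theorem stmt7
    {n : ℕ} (hn : 1 ≤ n)
    {A B : Fin n → Type*} [∀ k, Fintype (A k)] [∀ k, Fintype (B k)]
    [∀ k, Nonempty (A k)] [∀ k, Nonempty (B k)]
    (g : (k : Fin n) → A k → B k → ℝ)
    (q : (k : Fin n) → A k → B k → Fin n → ℝ)
    (hq0 : ∀ k i j l, 0 ≤ q k i j l)
    (hq1 : ∀ k i j, ∑ l, q k i j l = 1)
    (N : ℕ) (hN : 1 ≤ N)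
    (hgN : ∀ k i j, ∃ m : ℕ, m ≤ N ∧ g k i j = (m : ℝ) / N)
    (hqN : ∀ k i j l, ∃ m : ℕ, m ≤ N ∧ q k i j l = (m : ℝ) / N)
    (k : Fin n)
    (lam : ℝ) (hlam : lam ∈ Set.Ioc (0:ℝ) 1) (hNlam : ∃ m : ℕ, (m : ℝ) = N * lam)
    (r : ℕ) (z : ℝ) (hz : z ∈ Set.Icc (0:ℝ) 1) (hz2 : ∃ m : ℕ, (m : ℝ) = 2 ^ r * z) :
    ∀ (ii : (k : Fin n) → A k) (jj : (k : Fin n) → B k),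
      (∃ a : ℤ, (a : ℝ) = 2 ^ r * (N : ℝ) ^ (2 * n) * Wmat g q k lam z ii jj) ∧
      |Wmat g q k lam z ii jj| ≤ 2 * Real.sqrt n ^ n :=
  stmt7_general g q N hgN hqN k lam hlam hNlam r z hz hz2
end

section
/- Fix an initial state k∈K and λ∈(0,1]. Then the map z↦val W^k_λ(z) is continuous and strictly decreasing on ℝ. Moreover, whenever the limits F^k(z):=lim_{λ→0⁺} λ^{−n}·val W^k_λ(z) exist in ℝ∪{−∞,+∞}, the map z↦F^k(z) is non-increasing, and strictly decreasing on the set of z where F^k(z) is finite. -/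
/-!
Write `W^k_λ(z) = d^k_λ - z • d^0_λ`. For a row-stochastic `Q` and `λ ∈ (0,1]`, Gershgorin's
theorem puts every complex eigenvalue of `Id - (1-λ)Q` at distance at least `λ` from `0`, so
`|det (Id - (1-λ)Q)| ≥ λ^n`; the determinant never vanishes along `t ↦ det (Id - tQ)`, `t ∈ [0,1)`,
and equals `1` at `t = 0`, hence `d^0_λ ≥ λ^n > 0` entrywise. The value of a matrix game is
monotone and shifts with additive constants, so `z ↦ val W^k_λ(z)` is Lipschitz and
`val W^k_λ(z₂) ≤ val W^k_λ(z₁) - (z₂ - z₁) λ^n` for `z₁ ≤ z₂`. After scaling by `λ^{-n}` this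
survives the limit as `F^k(z₂) + (z₂ - z₁) ≤ F^k(z₁)`.
-/

open Filter Set Topology

section MatrixGame

variable {α β : Type*} [Fintype α] [Fintype β]

def payoff (M : α → β → ℝ) (x : α → ℝ) (y : β → ℝ) : ℝ :=
  ∑ a, ∑ b, x a * M a b * y b

lemma abs_apply_le_norm (M : α → β → ℝ) (a : α) (b : β) : |M a b| ≤ ‖M‖ :=
  (norm_le_pi_norm (M a) b).trans (norm_le_pi_norm M a)

variable {M N : α → β → ℝ} {x : α → ℝ} {y : β → ℝ}

lemma payoff_le_payoff_add {c : ℝ} (h : ∀ a b, M a b ≤ N a b + c)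
    (hx : x ∈ stdSimplex ℝ α) (hy : y ∈ stdSimplex ℝ β) :
    payoff M x y ≤ payoff N x y + c := by
  have hc : payoff (fun _ _ => c) x y = c := by
    simp only [payoff, ← Finset.mul_sum, hy.2, mul_one, ← Finset.sum_mul, hx.2, one_mul]
  calc payoff M x y ≤ payoff (fun a b => N a b + c) x y := by
        unfold payoff
        gcongr with a _ b _
        · exact hy.1 b
        · exact hx.1 a
        · exact h a b
    _ = payoff N x y + payoff (fun _ _ => c) x y := by
        simp only [payoff, mul_add, add_mul, Finset.sum_add_distrib]
    _ = payoff N x y + c := by rw [hc]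

variable (M) in
lemma abs_payoff_le_norm (hx : x ∈ stdSimplex ℝ α) (hy : y ∈ stdSimplex ℝ β) :
    |payoff M x y| ≤ ‖M‖ := by
  have hzero : payoff (fun _ _ => 0) x y = 0 := by simp [payoff]
  rw [abs_le]
  have hlow := payoff_le_payoff_add (M := fun _ _ => 0) (N := M) (c := ‖M‖)
    (fun a b => by linarith [neg_abs_le (M a b), abs_apply_le_norm M a b]) hx hy
  have hup := payoff_le_payoff_add (M := M) (N := fun _ _ => 0) (c := ‖M‖)
    (fun a b => by linarith [le_abs_self (M a b), abs_apply_le_norm M a b]) hx hy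
  rw [hzero] at hlow hup
  constructor <;> linarith

variable [Nonempty α] [Nonempty β]

theorem matVal_le_matVal_add {c : ℝ} (h : ∀ a b, M a b ≤ N a b + c) :
    matVal M ≤ matVal N + c := by
  classical
  have : Nonempty (stdSimplex ℝ α) := ⟨⟨_, single_mem_stdSimplex ℝ (Classical.arbitrary α)⟩⟩
  obtain ⟨y₀⟩ : Nonempty (stdSimplex ℝ β) := ⟨⟨_, single_mem_stdSimplex ℝ (Classical.arbitrary β)⟩⟩
  have hbdd : ∀ (P : α → β → ℝ) (x : stdSimplex ℝ α),
      BddBelow (range fun y : stdSimplex ℝ β => payoff P x y) := fun P x =>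
    ⟨-‖P‖, forall_mem_range.2 fun y => (abs_le.1 (abs_payoff_le_norm P x.2 y.2)).1⟩
  have hN : BddAbove (range fun x : stdSimplex ℝ α => ⨅ y : stdSimplex ℝ β, payoff N x y) :=
    ⟨‖N‖, forall_mem_range.2 fun x =>
      (ciInf_le (hbdd N x) y₀).trans (abs_le.1 (abs_payoff_le_norm N x.2 y₀.2)).2⟩
  refine ciSup_le fun x => ?_
  calc ⨅ y : stdSimplex ℝ β, payoff M x y ≤ (⨅ y : stdSimplex ℝ β, payoff N x y) + c := by
        rw [← sub_le_iff_le_add]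
        exact le_ciInf fun y => sub_le_iff_le_add.2
          ((ciInf_le (hbdd M x) y).trans (payoff_le_payoff_add h x.2 y.2))
    _ ≤ matVal N + c := add_le_add_left (le_ciSup hN x) c

variable (M) (D : α → β → ℝ)

theorem matVal_sub_smul_le {z₁ z₂ m : ℝ} (hz : z₁ ≤ z₂) (hm : ∀ a b, m ≤ D a b) :
    matVal (fun a b => M a b - z₂ * D a b) ≤
      matVal (fun a b => M a b - z₁ * D a b) - (z₂ - z₁) * m := by
  rw [sub_eq_add_neg]
  exact matVal_le_matVal_add fun a b => by nlinarith [hm a b]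

theorem inv_mul_matVal_sub_smul_add_le {c z₁ z₂ : ℝ} (hc : 0 < c) (hz : z₁ ≤ z₂)
    (hD : ∀ a b, c ≤ D a b) :
    c⁻¹ * matVal (fun a b => M a b - z₂ * D a b) + (z₂ - z₁) ≤
      c⁻¹ * matVal (fun a b => M a b - z₁ * D a b) := by
  have h := matVal_sub_smul_le M D hz hD
  calc c⁻¹ * matVal (fun a b => M a b - z₂ * D a b) + (z₂ - z₁)
      = c⁻¹ * (matVal (fun a b => M a b - z₂ * D a b) + (z₂ - z₁) * c) := by field_simp
    _ ≤ c⁻¹ * matVal (fun a b => M a b - z₁ * D a b) := by gcongr; linarith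

theorem lipschitzWith_matVal_sub_smul :
    LipschitzWith ‖D‖₊ fun z => matVal fun a b => M a b - z * D a b := by
  refine LipschitzWith.of_le_add_mul _ fun z w => matVal_le_matVal_add fun a b => ?_
  have : (w - z) * D a b ≤ dist z w * ‖D‖ := by
    rw [Real.dist_eq, abs_sub_comm]
    exact (le_abs_self _).trans (abs_mul (w - z) (D a b) ▸
      mul_le_mul_of_nonneg_left (abs_apply_le_norm D a b) (abs_nonneg _))
  rw [coe_nnnorm]
  linarith

theorem strictAnti_matVal_sub_smul (hD : ∀ a b, 0 < D a b) :
    StrictAnti fun z => matVal fun a b => M a b - z * D a b := by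
  obtain ⟨p, hp⟩ := Finite.exists_min fun p : α × β => D p.1 p.2
  intro z₁ z₂ hz
  have := matVal_sub_smul_le M D hz.le fun a b => hp (a, b)
  nlinarith [hD p.1 p.2]

end MatrixGame

theorem pow_card_le_norm_det_of_diag_dominant {K ι : Type*} [NormedField K] [IsAlgClosed K]
    [Fintype ι] [DecidableEq ι] {A : Matrix ι ι K} {δ : ℝ} (hδ : 0 ≤ δ)
    (h : ∀ k, δ + ∑ j ∈ Finset.univ.erase k, ‖A k j‖ ≤ ‖A k k‖) :
    δ ^ Fintype.card ι ≤ ‖A.det‖ := by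
  have hroot : ∀ μ ∈ A.charpoly.roots, δ ≤ ‖μ‖ := by
    intro μ hμ
    have hspec : μ ∈ spectrum K (Matrix.toLin' A) := by
      rw [Matrix.spectrum_toLin', Matrix.mem_spectrum_iff_isRoot_charpoly]
      exact (Polynomial.mem_roots'.1 hμ).2
    obtain ⟨k, hk⟩ := eigenvalue_mem_ball (Module.End.hasEigenvalue_iff_mem_spectrum.2 hspec)
    rw [mem_closedBall_iff_norm'] at hk
    linarith [h k, norm_sub_norm_le (A k k) μ]
  have hnorm : ‖A.charpoly.roots.prod‖ = (A.charpoly.roots.map (‖·‖)).prod :=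
    map_multiset_prod (normHom (α := K)) _
  rw [A.det_eq_prod_roots_charpoly, hnorm, ← A.charpoly_natDegree_eq_dim,
    ← IsAlgClosed.card_roots_eq_natDegree, ← Multiset.prod_replicate, ← Multiset.map_const']
  exact Multiset.prod_map_le_prod_map₀ _ _ (fun _ _ => hδ) hroot

section RowStochastic

variable {ι : Type*} [Fintype ι] [DecidableEq ι] {Q : Matrix ι ι ℝ}

theorem pow_card_le_abs_det_one_sub_smul (hQ : Q ∈ Matrix.rowStochastic ℝ ι) {t : ℝ}
    (ht₀ : 0 ≤ t) (ht₁ : t ≤ 1) : (1 - t) ^ Fintype.card ι ≤ |(1 - t • Q).det| := by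
  have hoff : ∀ k, ∑ j ∈ Finset.univ.erase k, ‖((1 - t • Q) k j : ℂ)‖ = t * (1 - Q k k) := by
    intro k
    rw [← Matrix.sum_row_of_mem_rowStochastic hQ k, ← Finset.sum_erase_eq_sub (Finset.mem_univ k),
      Finset.mul_sum]
    refine Finset.sum_congr rfl fun j hj => ?_
    simp [Matrix.one_apply_ne' (Finset.ne_of_mem_erase hj), abs_of_nonneg ht₀,
      abs_of_nonneg (Matrix.nonneg_of_mem_rowStochastic hQ (i := k) (j := j))]
  have hdiag : ∀ k, 1 - t * Q k k ≤ ‖((1 - t • Q) k k : ℂ)‖ := fun k => by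
    rw [Complex.norm_real, Real.norm_eq_abs]
    simpa using le_abs_self (1 - t * Q k k)
  have := pow_card_le_norm_det_of_diag_dominant (A := (1 - t • Q).map ((↑) : ℝ → ℂ))
    (δ := 1 - t) (by linarith) fun k => by
      simp only [Matrix.map_apply, hoff]
      linarith [hdiag k]
  have hdet : ((1 - t • Q).map ((↑) : ℝ → ℂ)).det = ((1 - t • Q).det : ℂ) :=
    (RingHom.map_det Complex.ofRealHom _).symm
  rwa [hdet, Complex.norm_real, Real.norm_eq_abs] at this

theorem det_one_sub_smul_pos (hQ : Q ∈ Matrix.rowStochastic ℝ ι) {t : ℝ} (ht₀ : 0 ≤ t)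
    (ht₁ : t < 1) : 0 < (1 - t • Q).det := by
  have hcont : Continuous fun s : ℝ => (1 - s • Q).det := by fun_prop
  have hne : ∀ s ∈ Icc 0 t, (1 - s • Q).det ≠ 0 := fun s hs =>
    abs_pos.1 ((pow_pos (by linarith [hs.2]) _).trans_le
      (pow_card_le_abs_det_one_sub_smul hQ hs.1 (by linarith [hs.2])))
  by_contra! hle
  obtain ⟨s, hs, hs0⟩ := intermediate_value_Icc' ht₀ hcont.continuousOn
    ⟨hle, by simp⟩
  exact hne s hs hs0

theorem pow_card_le_det_one_sub_smul (hQ : Q ∈ Matrix.rowStochastic ℝ ι) {lam : ℝ}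
    (hlam : lam ∈ Ioc 0 1) : lam ^ Fintype.card ι ≤ (1 - (1 - lam) • Q).det := by
  have h := pow_card_le_abs_det_one_sub_smul hQ (t := 1 - lam) (by linarith [hlam.2])
    (by linarith [hlam.1])
  rwa [sub_sub_cancel, abs_of_pos (det_one_sub_smul_pos hQ (by linarith [hlam.2])
    (by linarith [hlam.1]))] at h

end RowStochastic

theorem add_coe_le_of_tendsto_of_tendsto {ι : Type*} {l : Filter ι} [l.NeBot] {u v : ι → ℝ}
    {a b : EReal} {c : ℝ} (hu : Tendsto (fun i => (u i : EReal)) l (𝓝 a))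
    (hv : Tendsto (fun i => (v i : EReal)) l (𝓝 b)) (h : ∀ᶠ i in l, u i + c ≤ v i) :
    a + c ≤ b := by
  have hu' : Tendsto (fun i => (u i : EReal) + c) l (𝓝 (a + c)) :=
    (EReal.continuousAt_add (.inr (EReal.coe_ne_bot c)) (.inr (EReal.coe_ne_top c))).tendsto.comp
      (hu.prodMk_nhds tendsto_const_nhds)
  exact le_of_tendsto_of_tendsto hu' hv (h.mono fun i hi => by dsimp only; exact_mod_cast hi)

theorem stmt17_general
    {n : ℕ}
    {A B : Fin n → Type*} [∀ k, Fintype (A k)] [∀ k, Fintype (B k)]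
    [∀ k, Nonempty (A k)] [∀ k, Nonempty (B k)]
    (g : (k : Fin n) → A k → B k → ℝ)
    (q : (k : Fin n) → A k → B k → Fin n → ℝ)
    (hq0 : ∀ k i j l, 0 ≤ q k i j l)
    (hq1 : ∀ k i j, ∑ l, q k i j l = 1)
    (k : Fin n)
    (lam : ℝ) (hlam : lam ∈ Set.Ioc (0:ℝ) 1) :
    Continuous (fun z : ℝ => matVal (Wmat g q k lam z)) ∧
    StrictAnti (fun z : ℝ => matVal (Wmat g q k lam z)) ∧
    ∀ F : ℝ → EReal,
      (∀ z : ℝ,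
        Tendsto (fun mu : ℝ => (((mu ^ n)⁻¹ * matVal (Wmat g q k mu z) : ℝ) : EReal))
          (𝓝[>] (0:ℝ)) (𝓝 (F z))) →
      (∀ z₁ z₂ : ℝ, z₁ ≤ z₂ → F z₂ ≤ F z₁) ∧
      (∀ z₁ z₂ : ℝ, z₁ < z₂ →
        F z₁ ≠ ⊤ → F z₁ ≠ ⊥ → F z₂ ≠ ⊤ → F z₂ ≠ ⊥ → F z₂ < F z₁) := by
  have hdZero : ∀ mu ∈ Ioc (0:ℝ) 1, ∀ ii jj, mu ^ n ≤ dZero q ii jj mu := fun mu hmu ii jj => by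
    simpa only [Fintype.card_fin, dZero] using pow_card_le_det_one_sub_smul
      (Q := Matrix.of fun l l' => q l (ii l) (jj l) l')
      (Matrix.mem_rowStochastic_iff_sum.2 ⟨fun l l' => hq0 l _ _ l', fun l => hq1 l _ _⟩) hmu
  have hgap : ∀ z₁ z₂, z₁ ≤ z₂ → ∀ mu ∈ Ioc (0:ℝ) 1,
      (mu ^ n)⁻¹ * matVal (Wmat g q k mu z₂) + (z₂ - z₁) ≤
        (mu ^ n)⁻¹ * matVal (Wmat g q k mu z₁) := fun z₁ z₂ hz mu hmu =>
    inv_mul_matVal_sub_smul_add_le _ _ (pow_pos hmu.1 n) hz (hdZero mu hmu)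
  refine ⟨(lipschitzWith_matVal_sub_smul _ _).continuous,
    strictAnti_matVal_sub_smul _ _ fun ii jj => (pow_pos hlam.1 n).trans_le (hdZero lam hlam ii jj),
    fun F hF => ?_⟩
  have hFgap : ∀ z₁ z₂, z₁ ≤ z₂ → F z₂ + (z₂ - z₁ : ℝ) ≤ F z₁ := fun z₁ z₂ hz =>
    add_coe_le_of_tendsto_of_tendsto (hF z₂) (hF z₁)
      (eventually_of_mem (Ioc_mem_nhdsGT zero_lt_one) (hgap z₁ z₂ hz))
  refine ⟨fun z₁ z₂ hz => (le_add_of_nonneg_right (EReal.coe_nonneg.2 (sub_nonneg.2 hz))).trans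
    (hFgap z₁ z₂ hz), fun z₁ z₂ hz _ _ h₂t h₂b => ?_⟩
  have h := hFgap z₁ z₂ hz.le
  rw [← EReal.coe_toReal h₂t h₂b] at h ⊢
  exact (EReal.coe_lt_coe_iff.2 (lt_add_of_pos_right _ (sub_pos.2 hz))).trans_le h

/-- For fixed λ ∈ (0,1], z ↦ val W^k_λ(z) is continuous and strictly decreasing.
Moreover, whenever the limits F^k(z) = lim_{λ→0⁺} λ^{−n}·val W^k_λ(z) exist in ℝ∪{±∞},
z ↦ F^k(z) is non-increasing, and strictly decreasing where finite. -/
theorem stmt17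
    {n : ℕ} (hn : 1 ≤ n)
    {A B : Fin n → Type*} [∀ k, Fintype (A k)] [∀ k, Fintype (B k)]
    [∀ k, Nonempty (A k)] [∀ k, Nonempty (B k)]
    (g : (k : Fin n) → A k → B k → ℝ)
    (q : (k : Fin n) → A k → B k → Fin n → ℝ)
    (hq0 : ∀ k i j l, 0 ≤ q k i j l)
    (hq1 : ∀ k i j, ∑ l, q k i j l = 1)
    (k : Fin n)
    (lam : ℝ) (hlam : lam ∈ Set.Ioc (0:ℝ) 1) :
    Continuous (fun z : ℝ => matVal (Wmat g q k lam z)) ∧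
    StrictAnti (fun z : ℝ => matVal (Wmat g q k lam z)) ∧
    ∀ F : ℝ → EReal,
      (∀ z : ℝ,
        Tendsto (fun mu : ℝ => (((mu ^ n)⁻¹ * matVal (Wmat g q k mu z) : ℝ) : EReal))
          (𝓝[>] (0:ℝ)) (𝓝 (F z))) →
      (∀ z₁ z₂ : ℝ, z₁ ≤ z₂ → F z₂ ≤ F z₁) ∧
      (∀ z₁ z₂ : ℝ, z₁ < z₂ →
        F z₁ ≠ ⊤ → F z₁ ≠ ⊥ → F z₂ ≠ ⊤ → F z₂ ≠ ⊥ → F z₂ < F z₁) :=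
  stmt17_general g q hq0 hq1 k lam hlam
end
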